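/- arXiv:1603.08147 — 5 statements merged into one kernel-verified Lean document; each statement's English description precedes it below -/
import Mathlib

section
/- Let S be a topological inverse semigroup and let a, c be 𝓓-equivalent elements of S. Then there exist b ∈ S with a 𝓡 b and b 𝓛 c, and elements s, s′, t, t′ ∈ S with as = b, bs′ = a, tb = c, t′c = b, such that the maps 𝔣_{a,c} : H_a → H_c : x ↦ txs and 𝔣_{c,a} : H_c → H_a : x ↦ t′xs′ are continuous and mutually inverse; hence the 𝓗-classes H_a and H_c are homeomorphic closed subspaces of S. -/
/-!
Green's lemma: if `a 𝓡 b` with `as = b`, `bs′ = a`, then `x ↦ xs` maps `H_a` onto `H_b` with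
inverse `y ↦ ys′`; dually `b 𝓛 c` gives mutually inverse left translations between `H_b` and `H_c`.
Composing them yields `x ↦ txs` and `x ↦ t′xs′`, restrictions of continuous maps of `S`.

In a semigroup with `x x⁻¹ x = x`, `a ∈ xS¹` iff `x x⁻¹ a = a` (and `a ∈ S¹x` iff `a x⁻¹ x = a`),
so `H_a` is cut out by four equations between continuous maps and is closed since `S` is Hausdorff.
-/

universe u v

/-- An inverse semigroup: every element has a unique (von Neumann) inverse. -/
class InverseSemigroup (S : Type u) extends Semigroup S, Inv S where
  mul_inv_mul : ∀ a : S, a * a⁻¹ * a = a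
  inv_mul_inv : ∀ a : S, a⁻¹ * a * a⁻¹ = a⁻¹
  inv_unique : ∀ a b : S, a * b * a = a → b * a * b = b → b = a⁻¹

section Green
variable {S : Type u} [Mul S]

/-- `b ∈ a·S¹`. -/
def rDvd (a b : S) : Prop := b = a ∨ ∃ s : S, a * s = b
/-- `b ∈ S¹·a`. -/
def lDvd (a b : S) : Prop := b = a ∨ ∃ s : S, s * a = b
/-- Green's relation 𝓡: `a 𝓡 b` iff `aS¹ = bS¹`. -/
def greenR (a b : S) : Prop := rDvd a b ∧ rDvd b a
/-- Green's relation 𝓛: `a 𝓛 b` iff `S¹a = S¹b`. -/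
def greenL (a b : S) : Prop := lDvd a b ∧ lDvd b a
/-- Green's relation 𝓗 = 𝓛 ∩ 𝓡. -/
def greenH (a b : S) : Prop := greenR a b ∧ greenL a b
/-- Green's relation 𝓓 = 𝓡∘𝓛 = 𝓛∘𝓡. -/
def greenD (a b : S) : Prop := ∃ c : S, greenR a c ∧ greenL c b
/-- The 𝓡-class of `a`. -/
def RClass (a : S) : Set S := {x | greenR a x}
/-- The 𝓛-class of `a`. -/
def LClass (a : S) : Set S := {x | greenL a x}
/-- The 𝓗-class of `a`. -/
def HClass (a : S) : Set S := {x | greenH a x}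

end Green

section Semigroup
variable {S : Type u} [Semigroup S] {a b c x y s s' t t' : S}

theorem rDvd.trans (hab : rDvd a b) (hbc : rDvd b c) : rDvd a c := by
  rcases hab with rfl | ⟨s, rfl⟩
  · exact hbc
  · rcases hbc with rfl | ⟨u, rfl⟩
    · exact Or.inr ⟨s, rfl⟩
    · exact Or.inr ⟨s * u, (mul_assoc ..).symm⟩

theorem lDvd.trans (hab : lDvd a b) (hbc : lDvd b c) : lDvd a c := by
  rcases hab with rfl | ⟨s, rfl⟩
  · exact hbc
  · rcases hbc with rfl | ⟨u, rfl⟩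
    · exact Or.inr ⟨s, rfl⟩
    · exact Or.inr ⟨u * s, mul_assoc ..⟩

theorem lDvd.mul_right (h : lDvd x y) (s : S) : lDvd (x * s) (y * s) := by
  rcases h with rfl | ⟨u, rfl⟩
  · exact Or.inl rfl
  · exact Or.inr ⟨u, (mul_assoc ..).symm⟩

theorem rDvd.mul_left (h : rDvd x y) (t : S) : rDvd (t * x) (t * y) := by
  rcases h with rfl | ⟨u, rfl⟩
  · exact Or.inl rfl
  · exact Or.inr ⟨u, mul_assoc ..⟩

theorem greenR.symm (h : greenR a b) : greenR b a := ⟨h.2, h.1⟩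

theorem greenR.trans (hab : greenR a b) (hbc : greenR b c) : greenR a c :=
  ⟨hab.1.trans hbc.1, hbc.2.trans hab.2⟩

theorem greenL.symm (h : greenL a b) : greenL b a := ⟨h.2, h.1⟩

theorem greenL.trans (hab : greenL a b) (hbc : greenL b c) : greenL a c :=
  ⟨hab.1.trans hbc.1, hbc.2.trans hab.2⟩

theorem greenL.mul_right (h : greenL x y) (s : S) : greenL (x * s) (y * s) :=
  ⟨h.1.mul_right s, h.2.mul_right s⟩

theorem greenR.mul_left (h : greenR x y) (t : S) : greenR (t * x) (t * y) :=
  ⟨h.1.mul_left t, h.2.mul_left t⟩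

theorem greenR_mul_right_of_mul_mul_eq (h : x * s * s' = x) : greenR x (x * s) :=
  ⟨Or.inr ⟨s, rfl⟩, Or.inr ⟨s', h⟩⟩

theorem greenL_mul_left_of_mul_mul_eq (h : t' * (t * y) = y) : greenL y (t * y) :=
  ⟨Or.inr ⟨t, rfl⟩, Or.inr ⟨t', h⟩⟩

theorem mul_mul_eq_of_lDvd (hx : lDvd a x) (h : a * s * s' = a) : x * s * s' = x := by
  rcases hx with rfl | ⟨u, rfl⟩
  · exact h
  · simp only [mul_assoc] at h ⊢
    rw [h]

theorem mul_mul_eq_of_rDvd (hy : rDvd b y) (h : t' * (t * b) = b) : t' * (t * y) = y := by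
  rcases hy with rfl | ⟨v, rfl⟩
  · exact h
  · simp only [← mul_assoc] at h ⊢
    rw [h]

theorem greenH_mul_right (hab : greenR a b) (hs : a * s = b) (hs' : b * s' = a)
    (hx : greenH a x) : greenH b (x * s) ∧ x * s * s' = x := by
  have hxss : x * s * s' = x := mul_mul_eq_of_lDvd hx.2.1 (by rw [hs, hs'])
  have hR : greenR b (x * s) := hab.symm.trans (hx.1.trans (greenR_mul_right_of_mul_mul_eq hxss))
  have hL : greenL b (x * s) := hs ▸ hx.2.mul_right s
  exact ⟨⟨hR, hL⟩, hxss⟩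

theorem greenH_mul_left (hbc : greenL b c) (ht : t * b = c) (ht' : t' * c = b)
    (hy : greenH b y) : greenH c (t * y) ∧ t' * (t * y) = y := by
  have htty : t' * (t * y) = y := mul_mul_eq_of_rDvd hy.1.1 (by rw [ht, ht'])
  have hL : greenL c (t * y) := hbc.symm.trans (hy.2.trans (greenL_mul_left_of_mul_mul_eq htty))
  have hR : greenR c (t * y) := ht ▸ hy.1.mul_left t
  exact ⟨⟨hR, hL⟩, htty⟩

theorem rDvd_iff_mul_mul_eq (hx : x * y * x = x) : rDvd x a ↔ x * y * a = a := by
  constructor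
  · rintro (rfl | ⟨u, rfl⟩)
    · exact hx
    · rw [← mul_assoc, hx]
  · exact fun h => Or.inr ⟨y * a, by rw [← mul_assoc, h]⟩

theorem lDvd_iff_mul_mul_eq (hx : x * y * x = x) : lDvd x a ↔ a * y * x = a := by
  constructor
  · rintro (rfl | ⟨u, rfl⟩)
    · exact hx
    · rw [mul_assoc u, mul_assoc u, hx]
  · exact fun h => Or.inr ⟨a * y, h⟩

end Semigroup

section InverseSemigroup
variable {S : Type u} [InverseSemigroup S] {a b : S}
open InverseSemigroup

theorem rDvd.mul_inv_mul_eq (h : rDvd a b) : a * (a⁻¹ * b) = b := by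
  rw [← mul_assoc]
  exact (rDvd_iff_mul_mul_eq (mul_inv_mul a)).1 h

theorem lDvd.mul_inv_mul_eq (h : lDvd a b) : b * a⁻¹ * a = b :=
  (lDvd_iff_mul_mul_eq (mul_inv_mul a)).1 h

theorem greenH_iff_mul_inv_mul_eq (a x : S) :
    greenH a x ↔ (a * a⁻¹ * x = x ∧ x * x⁻¹ * a = a) ∧ (x * a⁻¹ * a = x ∧ a * x⁻¹ * x = a) := by
  simp only [greenH, greenR, greenL, rDvd_iff_mul_mul_eq (mul_inv_mul _),
    lDvd_iff_mul_mul_eq (mul_inv_mul _)]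

theorem isClosed_HClass [TopologicalSpace S] [T2Space S] [ContinuousMul S] [ContinuousInv S]
    (a : S) : IsClosed (HClass a) := by
  simp only [HClass, greenH_iff_mul_inv_mul_eq, Set.ofPred_and]
  refine ((isClosed_eq ?_ ?_).inter (isClosed_eq ?_ ?_)).inter
    ((isClosed_eq ?_ ?_).inter (isClosed_eq ?_ ?_)) <;> fun_prop

end InverseSemigroup

/-- For 𝓓-equivalent elements `a, c` of a topological inverse semigroup there are `b, s, s′,
t, t′` with `a 𝓡 b`, `b 𝓛 c`, `as = b`, `bs′ = a`, `tb = c`, `t′c = b`, such that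
`x ↦ txs : H_a → H_c` and `x ↦ t′xs′ : H_c → H_a` are continuous and mutually inverse;
hence `H_a` and `H_c` are homeomorphic closed subspaces of `S`. -/
theorem statement_1 {S : Type u} [InverseSemigroup S] [TopologicalSpace S] [T2Space S]
    [ContinuousMul S] [ContinuousInv S] (a c : S) (hac : greenD a c) :
    ∃ b s s' t t' : S,
      greenR a b ∧ greenL b c ∧
      a * s = b ∧ b * s' = a ∧ t * b = c ∧ t' * c = b ∧
      Set.MapsTo (fun x => t * x * s) (HClass a) (HClass c) ∧
      Set.MapsTo (fun x => t' * x * s') (HClass c) (HClass a) ∧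
      (∀ x ∈ HClass a, t' * (t * x * s) * s' = x) ∧
      (∀ x ∈ HClass c, t * (t' * x * s') * s = x) ∧
      ContinuousOn (fun x => t * x * s) (HClass a) ∧
      ContinuousOn (fun x => t' * x * s') (HClass c) ∧
      IsClosed (HClass a) ∧ IsClosed (HClass c) := by
  obtain ⟨b, hab, hbc⟩ := hac
  obtain ⟨s, hs⟩ : ∃ s, a * s = b := ⟨_, hab.1.mul_inv_mul_eq⟩
  obtain ⟨s', hs'⟩ : ∃ s', b * s' = a := ⟨_, hab.2.mul_inv_mul_eq⟩
  obtain ⟨t, ht⟩ : ∃ t, t * b = c := ⟨_, hbc.1.mul_inv_mul_eq⟩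
  obtain ⟨t', ht'⟩ : ∃ t', t' * c = b := ⟨_, hbc.2.mul_inv_mul_eq⟩
  have forth : ∀ x ∈ HClass a, t * x * s ∈ HClass c ∧ t' * (t * x * s) * s' = x := by
    intro x hx
    obtain ⟨hxs, hxss⟩ := greenH_mul_right hab hs hs' hx
    obtain ⟨htxs, httxs⟩ := greenH_mul_left hbc ht ht' hxs
    rw [mul_assoc]
    exact ⟨htxs, by rw [httxs, hxss]⟩
  have back : ∀ y ∈ HClass c, t' * y * s' ∈ HClass a ∧ t * (t' * y * s') * s = y := by
    intro y hy
    obtain ⟨hty, htty⟩ := greenH_mul_left hbc.symm ht' ht hy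
    obtain ⟨htys, htyss⟩ := greenH_mul_right hab.symm hs' hs hty
    exact ⟨htys, by rw [mul_assoc, htyss, htty]⟩
  exact ⟨b, s, s', t, t', hab, hbc, hs, hs', ht, ht', fun x hx => (forth x hx).1,
    fun y hy => (back y hy).1, fun x hx => (forth x hx).2, fun y hy => (back y hy).2,
    by fun_prop, by fun_prop, isClosed_HClass a, isClosed_HClass c⟩
end

section
/- Let T and S be topological inverse semigroups such that S is an inverse subsemigroup of T (with the subspace topology). Let G be an 𝓗-class of S which is a closed subset of T, and let D_G be the 𝓓-class of S containing G. Then every 𝓗-class H of S with H ⊆ D_G is a closed subset of the topological space T. -/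
universe u v

section GreenIn
variable {S : Type u} [Mul S]

/-- `b ∈ a·P¹`, divisibility inside the subsemigroup `P`. -/
def rDvdIn (P : Set S) (a b : S) : Prop := b = a ∨ ∃ s ∈ P, a * s = b
/-- `b ∈ P¹·a`. -/
def lDvdIn (P : Set S) (a b : S) : Prop := b = a ∨ ∃ s ∈ P, s * a = b
/-- Green's relation 𝓡 of the subsemigroup `P`. -/
def greenRIn (P : Set S) (a b : S) : Prop := rDvdIn P a b ∧ rDvdIn P b a
/-- Green's relation 𝓛 of the subsemigroup `P`. -/
def greenLIn (P : Set S) (a b : S) : Prop := lDvdIn P a b ∧ lDvdIn P b a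
/-- Green's relation 𝓗 of the subsemigroup `P`. -/
def greenHIn (P : Set S) (a b : S) : Prop := greenRIn P a b ∧ greenLIn P a b
/-- Green's relation 𝓓 of the subsemigroup `P`. -/
def greenDIn (P : Set S) (a b : S) : Prop := ∃ c ∈ P, greenRIn P a c ∧ greenLIn P c b
/-- The 𝓗-class of `a` in the subsemigroup `P`. -/
def HClassIn (P : Set S) (a : S) : Set S := {x ∈ P | greenHIn P a x}
/-- The 𝓓-class of `a` in the subsemigroup `P`. -/
def DClassIn (P : Set S) (a : S) : Set S := {x ∈ P | greenDIn P a x}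

end GreenIn

/-!
Green's lemma, made topological. If `a * s = c` and `c * s' = a` with `s, s' ∈ P`, then
`x ↦ x * s'` maps the 𝓗-class of `c` bijectively onto that of `a`, with inverse `y ↦ y * s`.
Hence `H_c` is the preimage of `H_a` under a continuous map, cut down by the equation
`x * s' * s = x`, which defines a closed set because `T` is Hausdorff; dually for 𝓛 and left
translations. An 𝓗-class in the 𝓓-class of `a` is reached from `H_a` by one 𝓡-step followed
by one 𝓛-step, so it is closed as well.
-/

section GreenLemma
variable {T : Type u} [InverseSemigroup T] {P : Set T}

theorem rDvdIn.exists_mul (hmul : ∀ a ∈ P, ∀ b ∈ P, a * b ∈ P) (hinv : ∀ a ∈ P, a⁻¹ ∈ P)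
    {a b : T} (ha : a ∈ P) (h : rDvdIn P a b) : ∃ s ∈ P, a * s = b := by
  rcases h with h | h
  · exact ⟨a⁻¹ * a, hmul _ (hinv a ha) _ ha, by rw [h, ← mul_assoc, InverseSemigroup.mul_inv_mul]⟩
  · exact h

theorem lDvdIn.exists_mul (hmul : ∀ a ∈ P, ∀ b ∈ P, a * b ∈ P) (hinv : ∀ a ∈ P, a⁻¹ ∈ P)
    {a b : T} (ha : a ∈ P) (h : lDvdIn P a b) : ∃ s ∈ P, s * a = b := by
  rcases h with h | h
  · exact ⟨a * a⁻¹, hmul _ ha _ (hinv a ha), h ▸ InverseSemigroup.mul_inv_mul a⟩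
  · exact h

theorem HClassIn_eq_of_mul_right (hmul : ∀ a ∈ P, ∀ b ∈ P, a * b ∈ P)
    (hinv : ∀ a ∈ P, a⁻¹ ∈ P) {a c s s' : T} (ha : a ∈ P) (hc : c ∈ P) (hs : s ∈ P)
    (hs' : s' ∈ P) (hac : a * s = c) (hca : c * s' = a) :
    HClassIn P c = {x | x * s' ∈ HClassIn P a ∧ x * s' * s = x} := by
  ext x
  constructor
  · rintro ⟨hx, ⟨hcx, hxc⟩, ⟨hcx', hxc'⟩⟩
    obtain ⟨v, hv, hcv⟩ := hcx.exists_mul hmul hinv hc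
    obtain ⟨w, hw, hxw⟩ := hxc.exists_mul hmul hinv hx
    obtain ⟨u, hu, huc⟩ := hcx'.exists_mul hmul hinv hc
    obtain ⟨u', hu', hux⟩ := hxc'.exists_mul hmul hinv hx
    have hfix : x * s' * s = x := by
      rw [← huc, mul_assoc u, mul_assoc u, hca, hac]
    refine ⟨⟨hmul _ hx _ hs', ⟨Or.inr ⟨s * (v * s'), hmul _ hs _ (hmul _ hv _ hs'), ?_⟩,
      Or.inr ⟨s * (w * s'), hmul _ hs _ (hmul _ hw _ hs'), ?_⟩⟩,
      ⟨Or.inr ⟨u, hu, ?_⟩, Or.inr ⟨u', hu', ?_⟩⟩⟩, hfix⟩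
    · simp only [← mul_assoc, hac, hcv]
    · rw [← mul_assoc, hfix, ← mul_assoc, hxw, hca]
    · rw [← hca, ← mul_assoc, huc]
    · rw [← mul_assoc, hux, hca]
  · rintro ⟨⟨hy, ⟨hay, hya⟩, ⟨hay', hya'⟩⟩, hfix⟩
    obtain ⟨p, hp, hap⟩ := hay.exists_mul hmul hinv ha
    obtain ⟨q, hq, hyq⟩ := hya.exists_mul hmul hinv hy
    obtain ⟨r, hr, hra⟩ := hay'.exists_mul hmul hinv ha
    obtain ⟨r', hr', hry⟩ := hya'.exists_mul hmul hinv hy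
    refine ⟨hfix ▸ hmul _ hy _ hs, ⟨Or.inr ⟨s' * (p * s), hmul _ hs' _ (hmul _ hp _ hs), ?_⟩,
      Or.inr ⟨s' * (q * s), hmul _ hs' _ (hmul _ hq _ hs), ?_⟩⟩,
      ⟨Or.inr ⟨r, hr, ?_⟩, Or.inr ⟨r', hr', ?_⟩⟩⟩
    · rw [← hfix, ← hap, ← hca]; simp only [mul_assoc]
    · rw [← mul_assoc, ← mul_assoc, hyq, hac]
    · rw [← hfix, ← hra, mul_assoc, hac]
    · rw [← hfix, ← mul_assoc, hry, hac]

theorem HClassIn_eq_of_mul_left (hmul : ∀ a ∈ P, ∀ b ∈ P, a * b ∈ P)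
    (hinv : ∀ a ∈ P, a⁻¹ ∈ P) {a c t t' : T} (ha : a ∈ P) (hc : c ∈ P) (ht : t ∈ P)
    (ht' : t' ∈ P) (hac : t * a = c) (hca : t' * c = a) :
    HClassIn P c = {x | t' * x ∈ HClassIn P a ∧ t * (t' * x) = x} := by
  ext x
  constructor
  · rintro ⟨hx, ⟨hcx, hxc⟩, ⟨hcx', hxc'⟩⟩
    obtain ⟨v, hv, hcv⟩ := hcx.exists_mul hmul hinv hc
    obtain ⟨w, hw, hxw⟩ := hxc.exists_mul hmul hinv hx
    obtain ⟨u, hu, huc⟩ := hcx'.exists_mul hmul hinv hc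
    obtain ⟨u', hu', hux⟩ := hxc'.exists_mul hmul hinv hx
    have hfix : t * (t' * x) = x := by
      rw [← hcv, ← mul_assoc t', hca, ← mul_assoc, hac]
    refine ⟨⟨hmul _ ht' _ hx, ⟨Or.inr ⟨v, hv, ?_⟩, Or.inr ⟨w, hw, ?_⟩⟩,
      ⟨Or.inr ⟨t' * (u * t), hmul _ ht' _ (hmul _ hu _ ht), ?_⟩,
        Or.inr ⟨t' * (u' * t), hmul _ ht' _ (hmul _ hu' _ ht), ?_⟩⟩⟩, hfix⟩
    · rw [← hcv, ← mul_assoc, hca]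
    · rw [mul_assoc, hxw, hca]
    · simp only [mul_assoc]; rw [hac, huc]
    · simp only [mul_assoc]; rw [hfix, hux, hca]
  · rintro ⟨⟨hy, ⟨hay, hya⟩, ⟨hay', hya'⟩⟩, hfix⟩
    obtain ⟨p, hp, hap⟩ := hay.exists_mul hmul hinv ha
    obtain ⟨q, hq, hyq⟩ := hya.exists_mul hmul hinv hy
    obtain ⟨r, hr, hra⟩ := hay'.exists_mul hmul hinv ha
    obtain ⟨r', hr', hry⟩ := hya'.exists_mul hmul hinv hy
    refine ⟨hfix ▸ hmul _ ht _ hy, ⟨Or.inr ⟨p, hp, ?_⟩, Or.inr ⟨q, hq, ?_⟩⟩,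
      ⟨Or.inr ⟨t * (r * t'), hmul _ ht _ (hmul _ hr _ ht'), ?_⟩,
        Or.inr ⟨t * (r' * t'), hmul _ ht _ (hmul _ hr' _ ht'), ?_⟩⟩⟩
    · rw [← hfix, ← hap, ← mul_assoc, hac]
    · rw [← hfix, mul_assoc, hyq, hac]
    · simp only [mul_assoc]; rw [hca, hra, hfix]
    · simp only [mul_assoc]; rw [hry, hac]

variable [TopologicalSpace T] [T2Space T] [ContinuousMul T]

theorem isClosed_HClassIn_of_greenRIn (hmul : ∀ a ∈ P, ∀ b ∈ P, a * b ∈ P)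
    (hinv : ∀ a ∈ P, a⁻¹ ∈ P) {a c : T} (ha : a ∈ P) (hc : c ∈ P) (hac : greenRIn P a c)
    (hG : IsClosed (HClassIn P a)) : IsClosed (HClassIn P c) := by
  obtain ⟨s, hs, has⟩ := hac.1.exists_mul hmul hinv ha
  obtain ⟨s', hs', hcs'⟩ := hac.2.exists_mul hmul hinv hc
  rw [HClassIn_eq_of_mul_right hmul hinv ha hc hs hs' has hcs']
  exact (hG.preimage (continuous_mul_const s')).inter (isClosed_eq (by fun_prop) continuous_id)

theorem isClosed_HClassIn_of_greenLIn (hmul : ∀ a ∈ P, ∀ b ∈ P, a * b ∈ P)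
    (hinv : ∀ a ∈ P, a⁻¹ ∈ P) {a c : T} (ha : a ∈ P) (hc : c ∈ P) (hac : greenLIn P a c)
    (hG : IsClosed (HClassIn P a)) : IsClosed (HClassIn P c) := by
  obtain ⟨t, ht, hta⟩ := hac.1.exists_mul hmul hinv ha
  obtain ⟨t', ht', htc'⟩ := hac.2.exists_mul hmul hinv hc
  rw [HClassIn_eq_of_mul_left hmul hinv ha hc ht ht' hta htc']
  exact (hG.preimage (continuous_const_mul t')).inter (isClosed_eq (by fun_prop) continuous_id)

end GreenLemma

theorem statement_4_general {T : Type u} [InverseSemigroup T] [TopologicalSpace T] [T2Space T]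
    [ContinuousMul T] (P : Set T)
    (hmul : ∀ a ∈ P, ∀ b ∈ P, a * b ∈ P) (hinv : ∀ a ∈ P, a⁻¹ ∈ P)
    (a : T) (ha : a ∈ P) (hG : IsClosed (HClassIn P a))
    (b : T) (hb : b ∈ P) (hH : HClassIn P b ⊆ DClassIn P a) :
    IsClosed (HClassIn P b) := by
  have hbb : b ∈ HClassIn P b := ⟨hb, ⟨Or.inl rfl, Or.inl rfl⟩, Or.inl rfl, Or.inl rfl⟩
  obtain ⟨-, c, hc, hac, hcb⟩ := hH hbb
  exact isClosed_HClassIn_of_greenLIn hmul hinv hc hb hcb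
    (isClosed_HClassIn_of_greenRIn hmul hinv ha hc hac hG)

/-- Let `T` be a topological inverse semigroup and `P ⊆ T` an inverse subsemigroup (the
semigroup `S`, carrying the subspace topology). If the 𝓗-class (in `S`) of an element
`a ∈ P` is closed in `T`, then every 𝓗-class of `S` contained in the 𝓓-class of `a`
is closed in `T`. -/
theorem statement_4 {T : Type u} [InverseSemigroup T] [TopologicalSpace T] [T2Space T]
    [ContinuousMul T] [ContinuousInv T] (P : Set T)
    (hmul : ∀ a ∈ P, ∀ b ∈ P, a * b ∈ P) (hinv : ∀ a ∈ P, a⁻¹ ∈ P)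
    (a : T) (ha : a ∈ P) (hG : IsClosed (HClassIn P a))
    (b : T) (hb : b ∈ P) (hH : HClassIn P b ⊆ DClassIn P a) :
    IsClosed (HClassIn P b) :=
  statement_4_general P hmul hinv a ha hG b hb hH
end

section
/- Let S be a topological inverse semigroup such that: (i) every maximal subgroup of S is H-closed in the class of topological groups; and (ii) every non-minimal idempotent of S is an isolated point of the subspace E(S) of idempotents. If T is a topological inverse semigroup containing S as a dense inverse subsemigroup (with the subspace topology) and T \ S ≠ ∅, then for every x ∈ T \ S at least one of the elements x·x⁻¹ or x⁻¹·x belongs to T \ S. -/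
universe u v

/-- A subset `A` of a topological magma (with the subspace topology and induced
multiplication) is H-closed in the class of topological groups: whenever `A` is embedded
topologically and multiplicatively into a Hausdorff topological group, its image is closed. -/
def IsHClosedGroupSet {X : Type u} [Mul X] [TopologicalSpace X] (A : Set X) : Prop :=
  ∀ (K : Type v) [Group K] [TopologicalSpace K] [IsTopologicalGroup K] [T2Space K]
    (f : A → K), Function.Injective f → Topology.IsInducing f →
    (∀ (x y : A) (h : (x : X) * (y : X) ∈ A), f ⟨(x : X) * (y : X), h⟩ = f x * f y) →
    IsClosed (Set.range f)

/-!
Suppose `x ∈ T \ S` but `x x⁻¹ = e` and `x⁻¹ x = f` lie in `S`. Approximate `x` by elements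
`s ∈ S`; then `e s f` also tends to `x`, and the idempotents `(e s f)(e s f)⁻¹ ≤ e` and
`(e s f)⁻¹(e s f) ≤ f` tend to `e` and `f`. As `e` and `f` are each either minimal or isolated
in `E(S)`, eventually these idempotents equal `e` and `f`, that is `e s f` lies in `R_e ∩ L_f`.
Fixing one such `b`, the elements `b⁻¹ e s f` lie in the maximal subgroup `H_f` and tend to
`b⁻¹ x`, an element of the maximal subgroup of `T` at `f`. Since `H_f` is H-closed, its image is
closed there, so `b⁻¹ x ∈ S` and `x = b (b⁻¹ x) ∈ S`.
-/

open Filter Topology Set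

namespace InverseSemigroup

variable {S : Type u} [InverseSemigroup S]

instance toInvolutiveInv : InvolutiveInv S where
  inv_inv a := (inv_unique a⁻¹ a (inv_mul_inv a) (mul_inv_mul a)).symm

theorem isIdempotentElem_mul_inv (a : S) : IsIdempotentElem (a * a⁻¹) := by
  rw [IsIdempotentElem, mul_assoc, ← mul_assoc a⁻¹, inv_mul_inv]

theorem isIdempotentElem_inv_mul (a : S) : IsIdempotentElem (a⁻¹ * a) := by
  simpa using isIdempotentElem_mul_inv a⁻¹

theorem _root_.IsIdempotentElem.inv_eq_self {e : S} (he : IsIdempotentElem e) : e⁻¹ = e :=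
  (inv_unique e e (by rw [he.eq, he.eq]) (by rw [he.eq, he.eq])).symm

/-- The key point is that `f (ef)⁻¹ e` is also an inverse of `ef`, so it equals `(ef)⁻¹`. -/
theorem isIdempotentElem_mul {e f : S} (he : IsIdempotentElem e) (hf : IsIdempotentElem f) :
    IsIdempotentElem (e * f) := by
  set a := (e * f)⁻¹
  have hfae : f * a * e = a := by
    refine inv_unique (e * f) (f * a * e) ?_ ?_
    · calc e * f * (f * a * e) * (e * f) = e * (f * f) * a * ((e * e) * f) := by
            simp only [mul_assoc]
        _ = e * f * a * (e * f) := by rw [he.eq, hf.eq]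
        _ = e * f := mul_inv_mul _
    · calc f * a * e * (e * f) * (f * a * e) = f * (a * ((e * e) * (f * f)) * a) * e := by
            simp only [mul_assoc]
        _ = f * a * e := by rw [he.eq, hf.eq, inv_mul_inv, mul_assoc]
  have ha : IsIdempotentElem a := by
    calc a * a = f * (a * (e * f) * a) * e := by
          conv_lhs => rw [← hfae]
          simp only [mul_assoc]
      _ = a := by rw [inv_mul_inv]; exact hfae
  rwa [← inv_inv (e * f), ha.inv_eq_self]

theorem commute_of_isIdempotentElem {e f : S} (he : IsIdempotentElem e)
    (hf : IsIdempotentElem f) : Commute e f := by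
  have hfe : f * e = (e * f)⁻¹ := by
    refine inv_unique (e * f) (f * e) ?_ ?_
    · calc e * f * (f * e) * (e * f) = e * (f * f) * (e * e) * f := by simp only [mul_assoc]
        _ = e * f * (e * f) := by rw [he.eq, hf.eq]; simp only [mul_assoc]
        _ = e * f := isIdempotentElem_mul he hf
    · calc f * e * (e * f) * (f * e) = f * (e * e) * (f * f) * e := by simp only [mul_assoc]
        _ = f * e * (f * e) := by rw [he.eq, hf.eq]; simp only [mul_assoc]
        _ = f * e := isIdempotentElem_mul hf he
  rw [Commute, SemiconjBy, hfe, (isIdempotentElem_mul he hf).inv_eq_self]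

protected theorem mul_inv_rev (a b : S) : (a * b)⁻¹ = b⁻¹ * a⁻¹ := by
  have hc := commute_of_isIdempotentElem (isIdempotentElem_mul_inv b) (isIdempotentElem_inv_mul a)
  refine (inv_unique (a * b) (b⁻¹ * a⁻¹) ?_ ?_).symm
  · calc a * b * (b⁻¹ * a⁻¹) * (a * b) = a * ((b * b⁻¹) * (a⁻¹ * a)) * b := by
          simp only [mul_assoc]
      _ = (a * a⁻¹ * a) * (b * b⁻¹ * b) := by rw [hc.eq]; simp only [mul_assoc]
      _ = a * b := by rw [mul_inv_mul, mul_inv_mul]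
  · calc b⁻¹ * a⁻¹ * (a * b) * (b⁻¹ * a⁻¹) = b⁻¹ * ((a⁻¹ * a) * (b * b⁻¹)) * a⁻¹ := by
          simp only [mul_assoc]
      _ = (b⁻¹ * b * b⁻¹) * (a⁻¹ * a * a⁻¹) := by rw [← hc.eq]; simp only [mul_assoc]
      _ = b⁻¹ * a⁻¹ := by rw [inv_mul_inv, inv_mul_inv]

protected theorem map_inv {T : Type v} [InverseSemigroup T] (i : S →ₙ* T) (a : S) :
    i a⁻¹ = (i a)⁻¹ :=
  inv_unique (i a) (i a⁻¹) (by rw [← map_mul, ← map_mul, mul_inv_mul])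
    (by rw [← map_mul, ← map_mul, inv_mul_inv])

theorem greenR_iff_mul_inv_eq {f t : S} (hf : IsIdempotentElem f) :
    greenR f t ↔ t * t⁻¹ = f := by
  refine ⟨fun ⟨hft, htf⟩ => ?_, fun h => ⟨Or.inr ⟨t, by rw [← h, mul_inv_mul]⟩, Or.inr ⟨t⁻¹, h⟩⟩⟩
  have hft' : f * t = t := by
    rcases hft with rfl | ⟨s, rfl⟩
    · exact hf.eq
    · rw [← mul_assoc, hf.eq]
  rcases htf with rfl | ⟨s, hs⟩
  · rw [hf.inv_eq_self, hf.eq]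
  · calc t * t⁻¹ = f * (t * t⁻¹) := by rw [← mul_assoc, hft']
      _ = t * t⁻¹ * f := (commute_of_isIdempotentElem hf (isIdempotentElem_mul_inv t)).eq
      _ = f := by rw [← hs, ← mul_assoc, mul_inv_mul]

theorem greenL_iff_inv_mul_eq {f t : S} (hf : IsIdempotentElem f) :
    greenL f t ↔ t⁻¹ * t = f := by
  refine ⟨fun ⟨hft, htf⟩ => ?_,
    fun h => ⟨Or.inr ⟨t, by rw [← h, ← mul_assoc, mul_inv_mul]⟩, Or.inr ⟨t⁻¹, h⟩⟩⟩
  have htf' : t * f = t := by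
    rcases hft with rfl | ⟨s, rfl⟩
    · exact hf.eq
    · rw [mul_assoc, hf.eq]
  rcases htf with rfl | ⟨s, hs⟩
  · rw [hf.inv_eq_self, hf.eq]
  · calc t⁻¹ * t = t⁻¹ * t * f := by rw [mul_assoc, htf']
      _ = f * (t⁻¹ * t) := (commute_of_isIdempotentElem (isIdempotentElem_inv_mul t) hf).eq
      _ = f := by rw [← hs, mul_assoc, ← mul_assoc t, mul_inv_mul]

theorem mem_HClass_iff {f t : S} (hf : IsIdempotentElem f) :
    t ∈ HClass f ↔ t * t⁻¹ = f ∧ t⁻¹ * t = f :=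
  (greenR_iff_mul_inv_eq hf).and (greenL_iff_inv_mul_eq hf)

theorem mem_HClass_self {f : S} (hf : IsIdempotentElem f) : f ∈ HClass f :=
  (mem_HClass_iff hf).2 ⟨by rw [hf.inv_eq_self, hf.eq], by rw [hf.inv_eq_self, hf.eq]⟩

theorem inv_mul_mem_HClass {a b : S} (h₁ : a * a⁻¹ = b * b⁻¹) (h₂ : a⁻¹ * a = b⁻¹ * b) :
    a⁻¹ * b ∈ HClass (a⁻¹ * a) := by
  rw [mem_HClass_iff (isIdempotentElem_inv_mul a), InverseSemigroup.mul_inv_rev, inv_inv]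
  constructor
  · calc a⁻¹ * b * (b⁻¹ * a) = a⁻¹ * (b * b⁻¹) * a := by simp only [mul_assoc]
      _ = a⁻¹ * a := by rw [← h₁, ← mul_assoc a⁻¹, inv_mul_inv]
  · calc b⁻¹ * a * (a⁻¹ * b) = b⁻¹ * (a * a⁻¹) * b := by simp only [mul_assoc]
      _ = a⁻¹ * a := by rw [h₁, ← mul_assoc b⁻¹, inv_mul_inv, h₂]

theorem mul_mem_HClass {f a b : S} (hf : IsIdempotentElem f) (ha : a ∈ HClass f)
    (hb : b ∈ HClass f) : a * b ∈ HClass f := by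
  rw [mem_HClass_iff hf] at ha hb ⊢
  rw [InverseSemigroup.mul_inv_rev]
  constructor
  · calc a * b * (b⁻¹ * a⁻¹) = a * (b * b⁻¹) * a⁻¹ := by simp only [mul_assoc]
      _ = a * a⁻¹ := by rw [hb.1, ← ha.2, ← mul_assoc, mul_inv_mul]
      _ = f := ha.1
  · calc b⁻¹ * a⁻¹ * (a * b) = b⁻¹ * (a⁻¹ * a) * b := by simp only [mul_assoc]
      _ = b⁻¹ * b := by rw [ha.2, ← hb.1, ← mul_assoc b⁻¹, inv_mul_inv]
      _ = f := hb.2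

theorem inv_mem_HClass {f a : S} (hf : IsIdempotentElem f) (ha : a ∈ HClass f) :
    a⁻¹ ∈ HClass f := by
  rw [mem_HClass_iff hf, inv_inv] at *
  exact ha.symm

theorem map_mem_HClass {T : Type v} [InverseSemigroup T] (i : S →ₙ* T) {f t : S}
    (hf : IsIdempotentElem f) (ht : t ∈ HClass f) : i t ∈ HClass (i f) := by
  rw [mem_HClass_iff hf] at ht
  rw [mem_HClass_iff (hf.map i), ← InverseSemigroup.map_inv, ← map_mul, ← map_mul, ht.1, ht.2]
  exact ⟨rfl, rfl⟩

instance {f : S} [hf : Fact (IsIdempotentElem f)] : Group (HClass f) where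
  mul a b := ⟨a * b, mul_mem_HClass hf.out a.2 b.2⟩
  mul_assoc a b c := Subtype.ext (mul_assoc a.1 b.1 c.1)
  one := ⟨f, mem_HClass_self hf.out⟩
  one_mul := fun ⟨a, ha⟩ => Subtype.ext <| by
    show f * a = a
    rw [← ((mem_HClass_iff hf.out).1 ha).1, mul_inv_mul]
  mul_one := fun ⟨a, ha⟩ => Subtype.ext <| by
    show a * f = a
    rw [← ((mem_HClass_iff hf.out).1 ha).2, ← mul_assoc, mul_inv_mul]
  inv a := ⟨a⁻¹, inv_mem_HClass hf.out a.2⟩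
  inv_mul_cancel a := Subtype.ext ((mem_HClass_iff hf.out).1 a.2).2

instance {f : S} [Fact (IsIdempotentElem f)] [TopologicalSpace S] [ContinuousMul S]
    [ContinuousInv S] : IsTopologicalGroup (HClass f) where
  continuous_mul :=
    (continuous_subtype_val.fst'.mul continuous_subtype_val.snd').subtype_mk _
  continuous_inv := continuous_subtype_val.inv.subtype_mk _

end InverseSemigroup

open InverseSemigroup

def NonminimalIdempotentsIsolated (S : Type u) [Mul S] [TopologicalSpace S] : Prop :=
  ∀ e : S, e * e = e → (∃ f : S, f * f = f ∧ f ≠ e ∧ e * f = f ∧ f * e = f) →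
    ∃ U : Set S, IsOpen U ∧ U ∩ {x : S | x * x = x} = {e}

section Topological

variable {α : Type*} {S : Type u} [InverseSemigroup S] [TopologicalSpace S]
  {T : Type v} [InverseSemigroup T] [TopologicalSpace T]

theorem NonminimalIdempotentsIsolated.eventually_eq_of_tendsto
    (hS : NonminimalIdempotentsIsolated S) {e : S} (he : IsIdempotentElem e) {l : Filter α}
    {g : α → S} (hidem : ∀ a, IsIdempotentElem (g a)) (hle : ∀ a, e * g a = g a)
    (hg : Tendsto g l (𝓝 e)) : ∀ᶠ a in l, g a = e := by
  by_cases hmin : ∃ f : S, f * f = f ∧ f ≠ e ∧ e * f = f ∧ f * e = f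
  · obtain ⟨U, hU, hUE⟩ := hS e he hmin
    have heU : e ∈ U := (hUE.symm ▸ mem_singleton e : e ∈ U ∩ _).1
    filter_upwards [hg (hU.mem_nhds heU)] with a ha
    exact (hUE ▸ ⟨ha, hidem a⟩ : g a ∈ ({e} : Set S))
  · refine Eventually.of_forall fun a => by_contra fun hne => hmin ⟨g a, hidem a, hne, hle a, ?_⟩
    exact (commute_of_isIdempotentElem (hidem a) he).eq.trans (hle a)

theorem NonminimalIdempotentsIsolated.eventually_mul_inv_eq [ContinuousMul T] [ContinuousInv T]
    (hS : NonminimalIdempotentsIsolated S) (i : S →ₙ* T) (hi : IsInducing i) {e : S}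
    (he : IsIdempotentElem e) {x : T} (hx : x * x⁻¹ = i e) {l : Filter α} {g : α → S}
    (hg : Tendsto (fun a => i (g a)) l (𝓝 x)) (hge : ∀ a, e * g a = g a) :
    ∀ᶠ a in l, g a * (g a)⁻¹ = e := by
  refine hS.eventually_eq_of_tendsto he (fun a => isIdempotentElem_mul_inv _)
    (fun a => by rw [← mul_assoc, hge]) ?_
  rw [hi.tendsto_nhds_iff, ← hx]
  simpa only [Function.comp_def, map_mul, InverseSemigroup.map_inv] using hg.mul hg.inv

variable [T2Space T] [ContinuousMul T] [ContinuousInv T]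

theorem IsHClosedGroupSet.mem_range_of_tendsto {f : S} (hf : IsIdempotentElem f)
    (hH : IsHClosedGroupSet.{u, v} (HClass f)) (i : S →ₙ* T) (hi : IsEmbedding i)
    {l : Filter α} [l.NeBot] {g : α → S} (hgH : ∀ᶠ a in l, g a ∈ HClass f) {y : T}
    (hg : Tendsto (fun a => i (g a)) l (𝓝 y)) (hy : y ∈ HClass (i f)) : y ∈ range i := by
  have : Fact (IsIdempotentElem (i f)) := ⟨hf.map i⟩
  let φ : HClass f → HClass (i f) := fun t => ⟨i t, map_mem_HClass i hf t.2⟩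
  have hφ : IsEmbedding φ := IsEmbedding.subtypeVal.of_comp_iff.mp (hi.comp .subtypeVal)
  have hclosed : IsClosed (range φ) :=
    hH _ φ hφ.injective hφ.isInducing fun a b _ => Subtype.ext (map_mul i a.1 b.1)
  have hy_mem : (⟨y, hy⟩ : HClass (i f)) ∈ closure (range φ) := by
    rw [closure_subtype]
    refine mem_closure_of_tendsto hg ?_
    filter_upwards [hgH] with a ha using ⟨φ ⟨g a, ha⟩, mem_range_self _, rfl⟩
  obtain ⟨t, ht⟩ := hclosed.closure_eq ▸ hy_mem
  exact ⟨t, congrArg Subtype.val ht⟩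

/-- Translating by `b⁻¹` for one fixed approximant `b ∈ R_e ∩ L_f` moves the others into `H_f`. -/
theorem mem_range_of_tendsto_of_eventually_mul_inv_eq {e f : S}
    (hH : IsHClosedGroupSet.{u, v} (HClass f)) (i : S →ₙ* T) (hi : IsEmbedding i) {x : T} (hxe : x * x⁻¹ = i e) (hxf : x⁻¹ * x = i f)
    {l : Filter α} [l.NeBot] {g : α → S} (hg : Tendsto (fun a => i (g a)) l (𝓝 x))
    (hgH : ∀ᶠ a in l, g a * (g a)⁻¹ = e ∧ (g a)⁻¹ * g a = f) : x ∈ range i := by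
  obtain ⟨a₀, hb⟩ := hgH.exists
  set b := g a₀
  have hf : IsIdempotentElem f := hb.2 ▸ isIdempotentElem_inv_mul b
  have hbx₁ : i b * (i b)⁻¹ = x * x⁻¹ := by
    rw [← InverseSemigroup.map_inv, ← map_mul, hb.1, hxe]
  have hbx₂ : (i b)⁻¹ * i b = x⁻¹ * x := by
    rw [← InverseSemigroup.map_inv, ← map_mul, hb.2, hxf]
  obtain ⟨t, ht⟩ : (i b)⁻¹ * x ∈ range i := by
    refine hH.mem_range_of_tendsto hf i hi (l := l) (g := fun a => b⁻¹ * g a) ?_ ?_ ?_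
    · filter_upwards [hgH] with a ha
      simpa only [hb.2] using inv_mul_mem_HClass (hb.1.trans ha.1.symm) (hb.2.trans ha.2.symm)
    · simpa only [map_mul, InverseSemigroup.map_inv] using tendsto_const_nhds.mul hg
    · simpa only [hbx₂, hxf] using inv_mul_mem_HClass hbx₁ hbx₂
  refine ⟨b * t, ?_⟩
  rw [map_mul, ht, ← mul_assoc, hbx₁, mul_inv_mul]

theorem mem_range_of_mem_closure (hS : NonminimalIdempotentsIsolated S)
    (hH : ∀ f : S, f * f = f → IsHClosedGroupSet.{u, v} (HClass f)) (i : S →ₙ* T)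
    (hi : IsEmbedding i) {x : T} (hx : x ∈ closure (range i)) {e f : S}
    (hxe : x * x⁻¹ = i e) (hxf : x⁻¹ * x = i f) : x ∈ range i := by
  have he : IsIdempotentElem e :=
    hi.injective (by rw [map_mul, ← hxe]; exact isIdempotentElem_mul_inv x)
  have hf : IsIdempotentElem f :=
    hi.injective (by rw [map_mul, ← hxf]; exact isIdempotentElem_inv_mul x)
  have : (comap i (𝓝 x)).NeBot := comap_neBot fun t ht => by
    obtain ⟨_, hyt, s, rfl⟩ := mem_closure_iff_nhds.mp hx t ht
    exact ⟨s, hyt⟩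
  have hg : Tendsto (fun s => i (e * s * f)) (comap i (𝓝 x)) (𝓝 x) := by
    have hexf : i e * x * i f = x := by
      rw [← hxe, ← hxf, mul_inv_mul, ← mul_assoc, mul_inv_mul]
    have := ((tendsto_const_nhds (x := i e)).mul (tendsto_comap (f := i) (x := 𝓝 x))).mul
      (tendsto_const_nhds (x := i f))
    simpa only [map_mul, hexf] using this
  have hR := hS.eventually_mul_inv_eq i hi.isInducing he hxe hg fun s => by
    rw [← mul_assoc, ← mul_assoc, he.eq]
  have hL := hS.eventually_mul_inv_eq i hi.isInducing hf (x := x⁻¹) (g := fun s => (e * s * f)⁻¹)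
    (by rwa [inv_inv]) (by simpa only [InverseSemigroup.map_inv] using hg.inv) fun s => by
      rw [InverseSemigroup.mul_inv_rev (e * s), hf.inv_eq_self, hf.mul_self_mul]
  refine mem_range_of_tendsto_of_eventually_mul_inv_eq (hH f hf) i hi hxe hxf hg ?_
  filter_upwards [hR, hL] with s hsR hsL
  exact ⟨hsR, by simpa only [inv_inv] using hsL⟩

end Topological

theorem statement_6_general {S : Type u} [InverseSemigroup S] [TopologicalSpace S]
    (hgrp : ∀ e : S, e * e = e → IsHClosedGroupSet.{u, v} (HClass e))
    (hiso : ∀ e : S, e * e = e →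
      (∃ f : S, f * f = f ∧ f ≠ e ∧ e * f = f ∧ f * e = f) →
      ∃ U : Set S, IsOpen U ∧ U ∩ {x : S | x * x = x} = {e})
    (T : Type v) [InverseSemigroup T] [TopologicalSpace T] [T2Space T]
    [ContinuousMul T] [ContinuousInv T]
    (i : S → T) (hinj : Function.Injective i) (hind : Topology.IsInducing i)
    (hmul : ∀ x y : S, i (x * y) = i x * i y)
    (hdense : Dense (Set.range i)) :
    ∀ x : T, x ∉ Set.range i → x * x⁻¹ ∉ Set.range i ∨ x⁻¹ * x ∉ Set.range i := by
  intro x hx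
  rw [← not_and_or]
  rintro ⟨⟨e, he⟩, f, hf⟩
  exact hx (mem_range_of_mem_closure (i := ⟨i, hmul⟩) hiso hgrp ⟨hind, hinj⟩ (hdense x)
    he.symm hf.symm)

/-- Let `S` be a topological inverse semigroup such that (i) every maximal subgroup of `S`
(the 𝓗-class of an idempotent) is H-closed in the class of topological groups, and
(ii) every non-minimal idempotent of `S` is isolated in `E(S)`. If `S` embeds as a dense
proper inverse subsemigroup into a topological inverse semigroup `T`, then for every
`x ∈ T \ S` at least one of `x·x⁻¹`, `x⁻¹·x` lies in `T \ S`. -/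
theorem statement_6 {S : Type u} [InverseSemigroup S] [TopologicalSpace S] [T2Space S]
    [ContinuousMul S] [ContinuousInv S]
    (hgrp : ∀ e : S, e * e = e → IsHClosedGroupSet.{u, v} (HClass e))
    (hiso : ∀ e : S, e * e = e →
      (∃ f : S, f * f = f ∧ f ≠ e ∧ e * f = f ∧ f * e = f) →
      ∃ U : Set S, IsOpen U ∧ U ∩ {x : S | x * x = x} = {e})
    (T : Type v) [InverseSemigroup T] [TopologicalSpace T] [T2Space T]
    [ContinuousMul T] [ContinuousInv T]
    (i : S → T) (hinj : Function.Injective i) (hind : Topology.IsInducing i)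
    (hmul : ∀ x y : S, i (x * y) = i x * i y) (hinv : ∀ x : S, i x⁻¹ = (i x)⁻¹)
    (hdense : Dense (Set.range i)) (hproper : Set.range i ≠ Set.univ) :
    ∀ x : T, x ∉ Set.range i → x * x⁻¹ ∉ Set.range i ∨ x⁻¹ * x ∉ Set.range i :=
  statement_6_general hgrp hiso T i hinj hind hmul hdense
end

section
/- Let λ ≥ 2 be a cardinal and let τ be a Hausdorff topology on the λ-polycyclic monoid P_λ making it a topological inverse semigroup, such that for every open neighborhood U(0) of 0 in (P_λ, τ) and every maximal chain L of the semilattice E(P_λ) the set U(0) ∩ L is infinite. Then (P_λ, τ) is absolutely H-closed in the class of topological inverse semigroups. -/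
universe u v

/-- The λ-polycyclic monoid over the index type `ι` (of cardinality λ), realized as
`(M_λ × M_λ) ∪ {0}` where `M_λ = FreeMonoid ι` is the free monoid on λ generators;
the pair `(a, b)` encodes the element `a⁻¹b` and `none` is the zero. -/
abbrev PolyMon (ι : Type u) : Type u := Option (FreeMonoid ι × FreeMonoid ι)

/-- The nonzero element `a⁻¹b` of the polycyclic monoid. -/
def polyEl {ι : Type u} (a b : FreeMonoid ι) : PolyMon ι := some (a, b)

instance {ι : Type u} : Zero (PolyMon ι) := ⟨none⟩

instance {ι : Type u} : One (PolyMon ι) := ⟨polyEl 1 1⟩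

open Classical in
/-- Multiplication of the polycyclic monoid:
`a⁻¹b · c⁻¹d = (c₁a)⁻¹d` if `c = c₁b`; `= a⁻¹(b₁d)` if `b = b₁c`; `= 0` otherwise,
and `0` is a two-sided zero. -/
noncomputable def polyMul {ι : Type u} (x y : PolyMon ι) : PolyMon ι :=
  Option.bind x fun p => Option.bind y fun q =>
    if h : ∃ c₁ : FreeMonoid ι, q.1 = c₁ * p.2 then some (Classical.choose h * p.1, q.2)
    else if h' : ∃ b₁ : FreeMonoid ι, p.2 = b₁ * q.1 then some (p.1, Classical.choose h' * q.2)
    else none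

noncomputable instance {ι : Type u} : Mul (PolyMon ι) := ⟨polyMul⟩

/-- Inversion of the polycyclic monoid: `(a⁻¹b)⁻¹ = b⁻¹a` and `0⁻¹ = 0`. -/
instance {ι : Type u} : Inv (PolyMon ι) :=
  ⟨fun x => Option.map (fun p => (p.2, p.1)) x⟩

/-- The natural partial order on idempotents: `e ≤ f` iff `ef = fe = e`. -/
def idemLE {ι : Type u} (e f : PolyMon ι) : Prop := e * f = e ∧ f * e = e

/-- The semilattice `E(P_λ)` of idempotents of the polycyclic monoid. -/
def idemE (ι : Type u) : Set (PolyMon ι) := {x | x * x = x}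

/-- A chain of the semilattice of idempotents of the polycyclic monoid. -/
def IsChainIdem {ι : Type u} (L : Set (PolyMon ι)) : Prop :=
  L ⊆ idemE ι ∧ ∀ e ∈ L, ∀ f ∈ L, idemLE e f ∨ idemLE f e

/-- A maximal chain of the semilattice of idempotents of the polycyclic monoid. -/
def IsMaxChainIdem {ι : Type u} (L : Set (PolyMon ι)) : Prop :=
  IsChainIdem L ∧ ∀ L' : Set (PolyMon ι), IsChainIdem L' → L ⊆ L' → L' = L

/-- A subset `A` of a topological magma (with the subspace topology and induced
multiplication) is H-closed in the class of topological inverse semigroups: whenever `A` is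
embedded topologically and multiplicatively into a Hausdorff topological inverse semigroup,
its image is closed. -/
def IsHClosedTISSet {X : Type u} [Mul X] [TopologicalSpace X] (A : Set X) : Prop :=
  ∀ (T : Type v) [InverseSemigroup T] [TopologicalSpace T] [T2Space T]
    [ContinuousMul T] [ContinuousInv T] (f : A → T),
    Function.Injective f → Topology.IsInducing f →
    (∀ (x y : A) (h : (x : X) * (y : X) ∈ A), f ⟨(x : X) * (y : X), h⟩ = f x * f y) →
    IsClosed (Set.range f)

/-!
A continuous homomorphism `g` from `P_λ` (`λ ≥ 2`) is either injective or constant: identifying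
two distinct elements identifies two distinct idempotents `a⁻¹a`, `c⁻¹c`; if they are orthogonal
this identifies `a⁻¹a` with `0`, and otherwise conjugating by `1⁻¹a`, `a⁻¹1` identifies `1` with
some `p⁻¹p ≠ 1`, hence a generator idempotent orthogonal to `p⁻¹p` with `0`. In both cases
`1` is identified with `0`.

For injective `g`, the condition on maximal chains forces every limit `t` of `g (w⁻¹w)` along a
free ultrafilter `Ω` on words to be `g 0`. Either the words that are suffixes of `Ω`-almost all
words form an `Ω`-large set `C`, and then `{0} ∪ {v⁻¹v | v ∈ C}` is a maximal chain whose
idempotents accumulate at `0` while being absorbed by `t`, so `t = t · g 0 = g 0`; or almost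
every `v⁻¹v` is orthogonal to almost every `w⁻¹w`, so `t = t · t = g 0`. Hence `g(E(P_λ))` is
closed and each `g (a⁻¹a)` is isolated in it. For `y` in the closure of the image, `yy⁻¹` and
`y⁻¹y` are then images of idempotents: if one is `g 0` then `y = g 0`; otherwise they are
`g (a⁻¹a)` and `g (b⁻¹b)`, every `g x` close to `y` has `xx⁻¹ = a⁻¹a` and `x⁻¹x = b⁻¹b`, i.e.
`x = a⁻¹b`, and so `y = g (a⁻¹b)`.
-/

namespace PolyMon

variable {ι : Type u}

def IsSuffix (v w : FreeMonoid ι) : Prop := ∃ c, w = c * v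

namespace IsSuffix

theorem refl (v : FreeMonoid ι) : IsSuffix v v := ⟨1, (one_mul v).symm⟩

theorem trans {u v w : FreeMonoid ι} (h₁ : IsSuffix u v) (h₂ : IsSuffix v w) :
    IsSuffix u w := by
  obtain ⟨c, rfl⟩ := h₁
  obtain ⟨d, rfl⟩ := h₂
  exact ⟨d * c, (mul_assoc _ _ _).symm⟩

theorem length_le {v w : FreeMonoid ι} (h : IsSuffix v w) : v.length ≤ w.length := by
  obtain ⟨c, rfl⟩ := h
  simp [FreeMonoid.length_mul]

theorem eq_of_length_le {v w : FreeMonoid ι} (h : IsSuffix v w) (hl : w.length ≤ v.length) :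
    v = w := by
  obtain ⟨c, rfl⟩ := h
  rw [FreeMonoid.length_mul] at hl
  obtain rfl : c = 1 := FreeMonoid.length_eq_zero.mp (by omega)
  exact (one_mul v).symm

end IsSuffix

theorem isSuffix_iff_toList {v w : FreeMonoid ι} : IsSuffix v w ↔ v.toList <:+ w.toList :=
  ⟨fun ⟨c, hc⟩ => ⟨c.toList, by rw [hc]; rfl⟩,
    fun ⟨l, hl⟩ => ⟨FreeMonoid.ofList l, FreeMonoid.toList.injective (by simpa using hl.symm)⟩⟩

theorem isSuffix_total {u v w : FreeMonoid ι} (hu : IsSuffix u w) (hv : IsSuffix v w) :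
    IsSuffix u v ∨ IsSuffix v u := by
  simp only [isSuffix_iff_toList] at *
  exact List.suffix_or_suffix_of_suffix hu hv

theorem finite_setOf_isSuffix (w : FreeMonoid ι) : {v | IsSuffix v w}.Finite := by
  refine (w.toList.tails.finite_toSet.image FreeMonoid.ofList).subset fun v hv => ?_
  exact ⟨v.toList, by simpa [List.mem_tails] using isSuffix_iff_toList.mp hv, rfl⟩

theorem exists_incomparable_of_ne_one [Nontrivial ι] {w : FreeMonoid ι} (hw : w ≠ 1) :
    ∃ j, ¬ IsSuffix (FreeMonoid.of j) w ∧ ¬ IsSuffix w (FreeMonoid.of j) := by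
  obtain ⟨l, i, hl⟩ := (List.eq_nil_or_concat w.toList).resolve_left
    (fun h => hw (FreeMonoid.toList.injective h))
  obtain ⟨j, hj⟩ := exists_ne i
  have hj_not : ¬ IsSuffix (FreeMonoid.of j) w := fun h => by
    rw [isSuffix_iff_toList, hl] at h
    have hlast := List.singleton_suffix_iff_getLast?_eq_some.mp h
    rw [List.concat_eq_append, List.getLast?_concat] at hlast
    exact hj (Option.some.inj hlast).symm
  refine ⟨j, hj_not, fun h => hj_not ?_⟩
  have hlen : (FreeMonoid.of j).length ≤ w.length := by
    have := FreeMonoid.length_eq_zero.not.mpr hw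
    rw [FreeMonoid.length_of]
    omega
  rw [← h.eq_of_length_le hlen]
  exact IsSuffix.refl w

theorem polyEl_inj {a b c d : FreeMonoid ι} : polyEl a b = polyEl c d ↔ a = c ∧ b = d := by
  simp [polyEl]

theorem polyEl_ne_zero (a b : FreeMonoid ι) : polyEl a b ≠ 0 := Option.some_ne_none _

protected theorem zero_mul (x : PolyMon ι) : 0 * x = 0 := rfl

protected theorem mul_zero (x : PolyMon ι) : x * 0 = 0 := by
  cases x <;> rfl

open Classical in
theorem polyEl_mul_polyEl (a b c d : FreeMonoid ι) :
    polyEl a b * polyEl c d =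
      if h : ∃ c₁, c = c₁ * b then polyEl (Classical.choose h * a) d
      else if h' : ∃ b₁, b = b₁ * c then polyEl a (Classical.choose h' * d)
      else 0 := rfl

theorem polyEl_mul_polyEl_of_eq_mul_left {a b c d c₁ : FreeMonoid ι} (h : c = c₁ * b) :
    polyEl a b * polyEl c d = polyEl (c₁ * a) d := by
  have hex : ∃ x, c = x * b := ⟨c₁, h⟩
  rw [polyEl_mul_polyEl, dif_pos hex,
    mul_right_cancel ((Classical.choose_spec hex).symm.trans h)]

theorem polyEl_mul_polyEl_of_eq_mul_right {a b c d b₁ : FreeMonoid ι} (h : b = b₁ * c) :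
    polyEl a b * polyEl c d = polyEl a (b₁ * d) := by
  by_cases hex : ∃ x, c = x * b
  · obtain ⟨x, rfl⟩ := hex
    rw [← mul_assoc] at h
    have hlen := congrArg FreeMonoid.length h
    simp only [FreeMonoid.length_mul] at hlen
    obtain rfl : x = 1 := FreeMonoid.length_eq_zero.mp (by omega)
    obtain rfl : b₁ = 1 := FreeMonoid.length_eq_zero.mp (by omega)
    rw [polyEl_mul_polyEl_of_eq_mul_left rfl, one_mul, one_mul]
  · have hex' : ∃ x, b = x * c := ⟨b₁, h⟩
    rw [polyEl_mul_polyEl, dif_neg hex, dif_pos hex',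
      mul_right_cancel ((Classical.choose_spec hex').symm.trans h)]

theorem polyEl_mul_polyEl_eq_zero {a b c d : FreeMonoid ι} (h₁ : ¬ IsSuffix b c)
    (h₂ : ¬ IsSuffix c b) : polyEl a b * polyEl c d = 0 := by
  rw [polyEl_mul_polyEl, dif_neg (show ¬ ∃ x, c = x * b from h₁),
    dif_neg (show ¬ ∃ x, b = x * c from h₂)]

theorem polyEl_mul_polyEl_cancel (a b c : FreeMonoid ι) :
    polyEl a b * polyEl b c = polyEl a c := by
  rw [polyEl_mul_polyEl_of_eq_mul_left (one_mul b).symm, one_mul]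

protected theorem mul_one (x : PolyMon ι) : x * 1 = x := by
  rcases x with _ | ⟨a, b⟩
  · rfl
  · exact (polyEl_mul_polyEl_of_eq_mul_right (mul_one b).symm).trans (by rw [mul_one]; rfl)

protected theorem mul_inv_mul (x : PolyMon ι) : x * x⁻¹ * x = x := by
  rcases x with _ | ⟨a, b⟩
  · rfl
  · show polyEl a b * polyEl b a * polyEl a b = polyEl a b
    rw [polyEl_mul_polyEl_cancel, polyEl_mul_polyEl_cancel]

protected theorem inv_mul_inv (x : PolyMon ι) : x⁻¹ * x * x⁻¹ = x⁻¹ := by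
  rcases x with _ | ⟨a, b⟩
  · rfl
  · show polyEl b a * polyEl a b * polyEl b a = polyEl b a
    rw [polyEl_mul_polyEl_cancel, polyEl_mul_polyEl_cancel]

theorem idemLE_polyEl_of_isSuffix {v w : FreeMonoid ι} (h : IsSuffix v w) :
    idemLE (polyEl w w) (polyEl v v) := by
  obtain ⟨c, rfl⟩ := h
  exact ⟨polyEl_mul_polyEl_of_eq_mul_right rfl, polyEl_mul_polyEl_of_eq_mul_left rfl⟩

theorem isSuffix_of_idemLE_polyEl {v w : FreeMonoid ι} (h : idemLE (polyEl w w) (polyEl v v)) :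
    IsSuffix v w := by
  by_cases hvw : IsSuffix v w
  · exact hvw
  by_cases hwv : IsSuffix w v
  · obtain ⟨c, rfl⟩ := hwv
    have h₁ := h.1
    rw [polyEl_mul_polyEl_of_eq_mul_left rfl, polyEl_inj] at h₁
    rw [h₁.2]
    exact IsSuffix.refl w
  · exact absurd (h.1.symm.trans (polyEl_mul_polyEl_eq_zero hwv hvw)) (polyEl_ne_zero w w)

theorem idemLE_zero (e : PolyMon ι) : idemLE 0 e := ⟨PolyMon.zero_mul e, PolyMon.mul_zero e⟩

theorem mem_idemE_iff {x : PolyMon ι} : x ∈ idemE ι ↔ x = 0 ∨ ∃ a, x = polyEl a a := by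
  refine ⟨fun hx => ?_, ?_⟩
  · rcases x with _ | ⟨a, b⟩
    · exact Or.inl rfl
    · refine Or.inr ⟨a, ?_⟩
      have hx : polyEl a b * polyEl a b = polyEl a b := hx
      by_cases hba : IsSuffix b a
      · obtain ⟨c, hc⟩ := hba
        rw [polyEl_mul_polyEl_of_eq_mul_left hc, polyEl_inj] at hx
        rw [hc, mul_eq_right.mp hx.1, one_mul]; rfl
      by_cases hab : IsSuffix a b
      · obtain ⟨c, hc⟩ := hab
        rw [polyEl_mul_polyEl_of_eq_mul_right hc, polyEl_inj] at hx
        rw [hc, mul_eq_right.mp hx.2, one_mul]; rfl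
      · exact absurd hx.symm (by rw [polyEl_mul_polyEl_eq_zero hba hab]; exact polyEl_ne_zero a b)
  · rintro (rfl | ⟨a, rfl⟩)
    · rfl
    · exact (idemLE_polyEl_of_isSuffix (IsSuffix.refl a)).1

theorem polyEl_mul_inv (a b : FreeMonoid ι) : polyEl a b * (polyEl a b)⁻¹ = polyEl a a :=
  polyEl_mul_polyEl_cancel a b a

theorem inv_mul_polyEl (a b : FreeMonoid ι) : (polyEl a b)⁻¹ * polyEl a b = polyEl b b :=
  polyEl_mul_polyEl_cancel b a b

theorem mul_inv_mem_idemE (x : PolyMon ι) : x * x⁻¹ ∈ idemE ι := by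
  rcases x with _ | ⟨a, b⟩
  · exact mem_idemE_iff.mpr (Or.inl rfl)
  · exact mem_idemE_iff.mpr (Or.inr ⟨a, polyEl_mul_inv a b⟩)

theorem inv_mul_mem_idemE (x : PolyMon ι) : x⁻¹ * x ∈ idemE ι := by
  rcases x with _ | ⟨a, b⟩
  · exact mem_idemE_iff.mpr (Or.inl rfl)
  · exact mem_idemE_iff.mpr (Or.inr ⟨b, inv_mul_polyEl a b⟩)

theorem eq_polyEl_of_mul_inv_eq {x : PolyMon ι} {a b : FreeMonoid ι}
    (ha : x * x⁻¹ = polyEl a a) (hb : x⁻¹ * x = polyEl b b) : x = polyEl a b := by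
  rcases x with _ | ⟨c, d⟩
  · exact absurd ha.symm (polyEl_ne_zero a a)
  · have hc := (polyEl_mul_inv c d).symm.trans ha
    have hd := (inv_mul_polyEl c d).symm.trans hb
    rw [polyEl_inj] at hc hd
    rw [← hc.1, ← hd.1]
    rfl

section Congruence

variable {T : Type v}

section Mul

variable [Mul T] (g : PolyMon ι →ₙ* T)

theorem map_one_eq_map_zero_of_map_polyEl_eq {a b : FreeMonoid ι} (h : g (polyEl a b) = g 0) :
    g 1 = g 0 :=
  calc g 1 = g (polyEl 1 a * polyEl a b * polyEl b 1) := by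
        rw [polyEl_mul_polyEl_cancel, polyEl_mul_polyEl_cancel]; rfl
    _ = g (polyEl 1 a * 0 * polyEl b 1) := by simp only [map_mul, h]
    _ = g 0 := by rw [PolyMon.mul_zero, PolyMon.zero_mul]

theorem map_one_eq_map_zero_of_map_polyEl_self_eq_map_one [Nontrivial ι] {p : FreeMonoid ι}
    (hp : p ≠ 1) (h : g (polyEl p p) = g 1) : g 1 = g 0 := by
  obtain ⟨j, hj₁, hj₂⟩ := exists_incomparable_of_ne_one hp
  refine map_one_eq_map_zero_of_map_polyEl_eq g (a := .of j) (b := .of j) ?_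
  calc g (polyEl (.of j) (.of j)) = g (polyEl (.of j) (.of j) * 1) := by rw [PolyMon.mul_one]
    _ = g (polyEl (.of j) (.of j) * polyEl p p) := by rw [map_mul, map_mul, h]
    _ = g 0 := by rw [polyEl_mul_polyEl_eq_zero hj₁ hj₂]

theorem map_one_eq_map_zero_of_map_polyEl_self_eq_mul_left [Nontrivial ι] {a c : FreeMonoid ι}
    (hc : c ≠ 1) (h : g (polyEl a a) = g (polyEl (c * a) (c * a))) : g 1 = g 0 := by
  refine map_one_eq_map_zero_of_map_polyEl_self_eq_map_one g hc ?_
  calc g (polyEl c c) = g (polyEl 1 a * polyEl (c * a) (c * a) * polyEl a 1) := by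
        rw [polyEl_mul_polyEl_of_eq_mul_left rfl, polyEl_mul_polyEl_of_eq_mul_right rfl,
          mul_one]
    _ = g (polyEl 1 a * polyEl a a * polyEl a 1) := by simp only [map_mul, h]
    _ = g 1 := by rw [polyEl_mul_polyEl_cancel, polyEl_mul_polyEl_cancel]; rfl

theorem map_one_eq_map_zero_of_map_polyEl_self_eq [Nontrivial ι] {a c : FreeMonoid ι}
    (hac : a ≠ c) (h : g (polyEl a a) = g (polyEl c c)) : g 1 = g 0 := by
  by_cases hsa : IsSuffix a c
  · obtain ⟨c, rfl⟩ := hsa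
    exact map_one_eq_map_zero_of_map_polyEl_self_eq_mul_left g
      (fun h1 => hac (by rw [h1, one_mul])) h
  by_cases hsc : IsSuffix c a
  · obtain ⟨a, rfl⟩ := hsc
    exact map_one_eq_map_zero_of_map_polyEl_self_eq_mul_left g
      (fun h1 => hac (by rw [h1, one_mul])) h.symm
  refine map_one_eq_map_zero_of_map_polyEl_eq g (a := a) (b := a) ?_
  calc g (polyEl a a) = g (polyEl a a * polyEl a a) := by rw [polyEl_mul_polyEl_cancel]
    _ = g (polyEl a a * polyEl c c) := by rw [map_mul, map_mul, h]
    _ = g 0 := by rw [polyEl_mul_polyEl_eq_zero hsa hsc]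

theorem map_eq_map_zero_of_map_one_eq (h : g 1 = g 0) (x : PolyMon ι) : g x = g 0 := by
  rw [← PolyMon.mul_one x, map_mul, h, ← map_mul, PolyMon.mul_zero]

end Mul

variable [InverseSemigroup T] (g : PolyMon ι →ₙ* T)

protected theorem map_inv (x : PolyMon ι) : g x⁻¹ = (g x)⁻¹ :=
  InverseSemigroup.inv_unique _ _ (by rw [← map_mul, ← map_mul, PolyMon.mul_inv_mul])
    (by rw [← map_mul, ← map_mul, PolyMon.inv_mul_inv])

theorem map_mul_inv (x : PolyMon ι) : g (x * x⁻¹) = g x * (g x)⁻¹ := by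
  rw [map_mul, PolyMon.map_inv]

theorem map_inv_mul (x : PolyMon ι) : g (x⁻¹ * x) = (g x)⁻¹ * g x := by
  rw [map_mul, PolyMon.map_inv]

theorem map_one_eq_map_zero_of_not_injective [Nontrivial ι] (hg : ¬ Function.Injective g) :
    g 1 = g 0 := by
  obtain ⟨x, y, hxy, hne⟩ : ∃ x y, g x = g y ∧ x ≠ y := by
    simpa [Function.Injective] using hg
  rcases x with _ | ⟨a, b⟩ <;> rcases y with _ | ⟨c, d⟩
  · exact absurd rfl hne
  · exact map_one_eq_map_zero_of_map_polyEl_eq g hxy.symm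
  · exact map_one_eq_map_zero_of_map_polyEl_eq g hxy
  change g (polyEl a b) = g (polyEl c d) at hxy
  have hac : g (polyEl a a) = g (polyEl c c) := by
    rw [← polyEl_mul_inv a b, ← polyEl_mul_inv c d, map_mul_inv, map_mul_inv, hxy]
  have hbd : g (polyEl b b) = g (polyEl d d) := by
    rw [← inv_mul_polyEl a b, ← inv_mul_polyEl c d, map_inv_mul, map_inv_mul, hxy]
  by_cases ha : a = c
  · refine map_one_eq_map_zero_of_map_polyEl_self_eq g (fun hb => hne ?_) hbd
    rw [ha, hb]
  · exact map_one_eq_map_zero_of_map_polyEl_self_eq g ha hac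

end Congruence

theorem isMaxChainIdem_insert_zero_image {C : Set (FreeMonoid ι)}
    (hchain : ∀ u ∈ C, ∀ v ∈ C, IsSuffix u v ∨ IsSuffix v u) (hinf : C.Infinite)
    (hsuffix : ∀ u ∈ C, ∀ v, IsSuffix v u → v ∈ C) :
    IsMaxChainIdem (insert 0 ((fun v => polyEl v v) '' C)) := by
  have hL : IsChainIdem (insert 0 ((fun v => polyEl v v) '' C)) := by
    refine ⟨?_, ?_⟩
    · rintro _ (rfl | ⟨v, -, rfl⟩)
      exacts [mem_idemE_iff.mpr (Or.inl rfl), mem_idemE_iff.mpr (Or.inr ⟨v, rfl⟩)]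
    · rintro _ (rfl | ⟨u, hu, rfl⟩) f (rfl | ⟨v, hv, rfl⟩)
      · exact Or.inl (idemLE_zero _)
      · exact Or.inl (idemLE_zero _)
      · exact Or.inr (idemLE_zero _)
      · exact (hchain u hu v hv).symm.imp idemLE_polyEl_of_isSuffix idemLE_polyEl_of_isSuffix
  refine ⟨hL, fun L' hL' hsub => subset_antisymm (fun x hx => ?_) hsub⟩
  rcases mem_idemE_iff.mp (hL'.1 hx) with rfl | ⟨v, rfl⟩
  · exact Set.mem_insert _ _
  have hinj : Set.InjOn FreeMonoid.length C := fun u hu w hw h => by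
    rcases hchain u hu w hw with h' | h'
    exacts [h'.eq_of_length_le h.ge, (h'.eq_of_length_le h.le).symm]
  obtain ⟨_, ⟨u, hu, rfl⟩, hlt⟩ := (hinf.image hinj).exists_gt v.length
  have hvu : IsSuffix v u := by
    rcases hL'.2 _ hx _ (hsub (Or.inr ⟨u, hu, rfl⟩)) with h | h
    · exact absurd (isSuffix_of_idemLE_polyEl h).length_le (not_le.mpr hlt)
    · exact isSuffix_of_idemLE_polyEl h
  exact Or.inr ⟨v, hsuffix u hu v hvu, rfl⟩

section Topology

open Filter Topology

variable {T : Type v} [TopologicalSpace T] [T2Space T]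

theorem mul_map_zero_of_mem_closure [Mul T] [ContinuousMul T] (g : PolyMon ι →ₙ* T) {y : T}
    (hy : y ∈ closure (Set.range g)) : y * g 0 = g 0 ∧ g 0 * y = g 0 := by
  have hclosed : IsClosed {s : T | s * g 0 = g 0 ∧ g 0 * s = g 0} :=
    (isClosed_eq (continuous_mul_const _) continuous_const).inter
      (isClosed_eq (continuous_const_mul _) continuous_const)
  refine hclosed.closure_subset_iff.mpr ?_ hy
  rintro - ⟨x, rfl⟩
  exact ⟨by rw [← map_mul, PolyMon.mul_zero], by rw [← map_mul, PolyMon.zero_mul]⟩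

variable [TopologicalSpace (PolyMon ι)]

variable (ι) in
def ZeroIsLimitOfMaxChains : Prop :=
  ∀ L : Set (PolyMon ι), IsMaxChainIdem L → (0 : PolyMon ι) ∈ closure (L \ {0})

theorem zeroIsLimitOfMaxChains_of_infinite
    (hchain : ∀ U : Set (PolyMon ι), IsOpen U → (0 : PolyMon ι) ∈ U →
      ∀ L : Set (PolyMon ι), IsMaxChainIdem L → (U ∩ L).Infinite) :
    ZeroIsLimitOfMaxChains ι := fun L hL => by
  refine mem_closure_iff.mpr fun U hU h0 => ?_
  rw [← Set.inter_sdiff_assoc]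
  exact ((hchain U hU h0 L hL).sdiff (Set.finite_singleton 0)).nonempty

theorem eq_map_zero_of_tendsto [Semigroup T] [ContinuousMul T] {g : PolyMon ι →ₙ* T}
    (hacc : ZeroIsLimitOfMaxChains ι) (hg : Continuous g) {Ω : Ultrafilter (FreeMonoid ι)}
    (hΩ : (Ω : Filter (FreeMonoid ι)) ≤ cofinite) {t : T}
    (ht : Tendsto (fun w => g (polyEl w w)) Ω (𝓝 t)) : t = g 0 := by
  have hidem : t * t = t := tendsto_nhds_unique
    ((ht.mul ht).congr fun w => by rw [← map_mul, polyEl_mul_polyEl_cancel]) ht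
  have hzero : t * g 0 = g 0 := (mul_map_zero_of_mem_closure g
    (mem_closure_of_tendsto ht (Eventually.of_forall fun w => Set.mem_range_self _))).1
  have hlim : ∀ v (f : FreeMonoid ι → T) (k : T), Tendsto f Ω (𝓝 k) →
      (∀ᶠ w in Ω, g (polyEl w w) * g (polyEl v v) = f w) → t * g (polyEl v v) = k :=
    fun v f k hf hev =>
      tendsto_nhds_unique (ht.mul_const _) (hf.congr' (hev.mono fun _ => Eq.symm))
  -- `C` is the set of words that are suffixes of `Ω`-almost all words; it is a chain.
  set C := {v | {w | IsSuffix v w} ∈ Ω}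
  have hC : ∀ v ∈ C, t * g (polyEl v v) = t := fun v hv =>
    hlim v _ t ht (mem_of_superset hv fun w hw => by
      rw [Set.mem_ofPred_eq, ← map_mul, (idemLE_polyEl_of_isSuffix hw).1])
  have hCc : ∀ v ∉ C, t * g (polyEl v v) = g 0 := fun v hv => by
    refine hlim v _ (g 0) tendsto_const_nhds ?_
    filter_upwards [Ω.compl_mem_iff_notMem.mpr hv,
      hΩ (finite_setOf_isSuffix v).compl_mem_cofinite] with w h₁ h₂
    rw [← map_mul, polyEl_mul_polyEl_eq_zero h₂ h₁]
  by_cases hCΩ : C ∈ Ω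
  · have hL : IsMaxChainIdem (insert 0 ((fun v => polyEl v v) '' C)) := by
      refine isMaxChainIdem_insert_zero_image (fun u hu v hv => ?_)
        (fun hfin => Ω.compl_mem_iff_notMem.mp (hΩ hfin.compl_mem_cofinite) hCΩ)
        (fun u hu v hvu => mem_of_superset hu fun w hw => hvu.trans hw)
      obtain ⟨w, hu, hv⟩ := Ω.nonempty_of_mem (inter_mem hu hv)
      exact isSuffix_total hu hv
    have h0 : g 0 ∈ closure {s | t * s = t} := by
      refine map_mem_closure hg (hacc _ hL) ?_
      rintro _ ⟨rfl | ⟨v, hv, rfl⟩, h0⟩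
      exacts [absurd rfl h0, hC v hv]
    have := (isClosed_eq (continuous_const_mul t) continuous_const).closure_subset h0
    exact this.symm.trans hzero
  · refine hidem.symm.trans (tendsto_nhds_unique (tendsto_const_nhds.mul ht) ?_)
    exact tendsto_const_nhds.congr' <|
      mem_of_superset (Ω.compl_mem_iff_notMem.mpr hCΩ) fun v hv => (hCc v hv).symm

theorem closure_image_subset_insert_map_zero [Semigroup T] [ContinuousMul T]
    {g : PolyMon ι →ₙ* T} (hacc : ZeroIsLimitOfMaxChains ι) (hg : Continuous g)
    {S : Set (PolyMon ι)} (hS : S ⊆ idemE ι) :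
    closure (g '' S) ⊆ insert (g 0) (g '' S) := by
  set W := {w : FreeMonoid ι | polyEl w w ∈ S}
  have hsub : g '' S ⊆ insert (g 0) ((fun w => g (polyEl w w)) '' W) := by
    rintro _ ⟨e, he, rfl⟩
    rcases mem_idemE_iff.mp (hS he) with rfl | ⟨w, rfl⟩
    exacts [Set.mem_insert _ _, Or.inr ⟨w, he, rfl⟩]
  intro t ht
  have ht' := closure_mono hsub ht
  rw [Set.insert_eq, closure_union, closure_singleton] at ht'
  rcases ht' with h0 | ht'
  · exact Or.inl h0
  have hcl : MapClusterPt t (𝓟 W) fun w => g (polyEl w w) := by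
    rwa [MapClusterPt, map_principal, ← mem_closure_iff_clusterPt]
  obtain ⟨Ω, hΩW, hΩt⟩ := mapClusterPt_iff_ultrafilter.mp hcl
  rcases Ω.le_cofinite_or_eq_pure with hcof | ⟨w, rfl⟩
  · exact Or.inl (eq_map_zero_of_tendsto hacc hg hcof hΩt)
  · rw [Ultrafilter.coe_pure] at hΩW hΩt
    exact Or.inr ⟨polyEl w w, le_principal_iff.mp hΩW,
      tendsto_nhds_unique (tendsto_pure_nhds _ w) hΩt⟩

theorem eventually_eq_polyEl_self_of_map_eq [Semigroup T] [ContinuousMul T]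
    {g : PolyMon ι →ₙ* T} (hacc : ZeroIsLimitOfMaxChains ι) (hg : Continuous g)
    (hinj : Function.Injective g) (a : FreeMonoid ι) :
    ∀ᶠ s in 𝓝 (g (polyEl a a)), ∀ e ∈ idemE ι, g e = s → e = polyEl a a := by
  have hnot : g (polyEl a a) ∉ closure (g '' (idemE ι \ {polyEl a a})) := fun h => by
    rcases closure_image_subset_insert_map_zero hacc hg Set.sdiff_subset h with
      h0 | ⟨e, he, hge⟩
    · exact polyEl_ne_zero a a (hinj h0)
    · exact he.2 (hinj hge)
  filter_upwards [isClosed_closure.isOpen_compl.mem_nhds hnot] with s hs e he hes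
  by_contra hne
  exact hs (subset_closure ⟨e, ⟨he, hne⟩, hes⟩)

variable [InverseSemigroup T] [ContinuousMul T] [ContinuousInv T] {g : PolyMon ι →ₙ* T}

theorem eq_map_polyEl_of_mem_closure (hacc : ZeroIsLimitOfMaxChains ι) (hg : Continuous g)
    (hinj : Function.Injective g) {y : T} (hy : y ∈ closure (Set.range g)) {a b : FreeMonoid ι}
    (ha : y * y⁻¹ = g (polyEl a a)) (hb : y⁻¹ * y = g (polyEl b b)) : y = g (polyEl a b) := by
  have hl : Tendsto (fun s => s * s⁻¹) (𝓝 y) (𝓝 (g (polyEl a a))) :=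
    ha ▸ (continuous_id.mul continuous_inv).tendsto y
  have hr : Tendsto (fun s => s⁻¹ * s) (𝓝 y) (𝓝 (g (polyEl b b))) :=
    hb ▸ (continuous_inv.mul continuous_id).tendsto y
  have hev : ∀ᶠ s in 𝓝 y, s ∈ Set.range g → s = g (polyEl a b) := by
    filter_upwards [hl.eventually (eventually_eq_polyEl_self_of_map_eq hacc hg hinj a),
      hr.eventually (eventually_eq_polyEl_self_of_map_eq hacc hg hinj b)]
      with s hsa hsb
    rintro ⟨x, rfl⟩
    rw [eq_polyEl_of_mul_inv_eq (hsa _ (mul_inv_mem_idemE x) (map_mul_inv g x))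
      (hsb _ (inv_mul_mem_idemE x) (map_inv_mul g x))]
  have hfreq : ∃ᶠ s in 𝓝 y, s ∈ ({g (polyEl a b)} : Set T) :=
    ((mem_closure_iff_frequently.mp hy).and_eventually hev).mono fun s h => h.2 h.1
  simpa using mem_closure_iff_frequently.mpr hfreq

theorem isClosed_range_of_continuous [Nontrivial ι] (hacc : ZeroIsLimitOfMaxChains ι)
    (hg : Continuous g) :
    IsClosed (Set.range g) := by
  by_cases hinj : Function.Injective g
  swap
  · have hconst : (g : PolyMon ι → T) = fun _ => g 0 :=
      funext (map_eq_map_zero_of_map_one_eq g (map_one_eq_map_zero_of_not_injective g hinj))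
    rw [hconst, Set.range_const]
    exact isClosed_singleton
  have hidem {y : T} (hy : y ∈ closure (g '' idemE ι)) : ∃ e ∈ idemE ι, g e = y := by
    rcases closure_image_subset_insert_map_zero hacc hg subset_rfl hy with h0 | he
    exacts [⟨0, mem_idemE_iff.mpr (Or.inl rfl), h0.symm⟩, he]
  have hl : Continuous fun s : T => s * s⁻¹ := by fun_prop
  have hr : Continuous fun s : T => s⁻¹ * s := by fun_prop
  refine closure_subset_iff_isClosed.mp fun y hy => ?_
  obtain ⟨e, he, hye⟩ := hidem (map_mem_closure hl hy
    (by rintro _ ⟨x, rfl⟩; exact ⟨_, mul_inv_mem_idemE x, map_mul_inv g x⟩))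
  obtain ⟨f, hf, hyf⟩ := hidem (map_mem_closure hr hy
    (by rintro _ ⟨x, rfl⟩; exact ⟨_, inv_mul_mem_idemE x, map_inv_mul g x⟩))
  have hzero := mul_map_zero_of_mem_closure g hy
  rcases mem_idemE_iff.mp he with rfl | ⟨a, rfl⟩
  · refine ⟨0, ?_⟩
    rw [← hzero.2, hye, InverseSemigroup.mul_inv_mul]
  rcases mem_idemE_iff.mp hf with rfl | ⟨b, rfl⟩
  · refine ⟨0, ?_⟩
    rw [← hzero.1, hyf, ← mul_assoc, InverseSemigroup.mul_inv_mul]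
  exact ⟨_, (eq_map_polyEl_of_mem_closure hacc hg hinj hy hye.symm hyf.symm).symm⟩

end Topology

end PolyMon

theorem statement_9_general {ι : Type u} [Nontrivial ι] [TopologicalSpace (PolyMon ι)]
    (hchain : ∀ U : Set (PolyMon ι), IsOpen U → (0 : PolyMon ι) ∈ U →
      ∀ L : Set (PolyMon ι), IsMaxChainIdem L → (U ∩ L).Infinite) :
    ∀ (T : Type v) [InverseSemigroup T] [TopologicalSpace T] [T2Space T]
      [ContinuousMul T] [ContinuousInv T] (h : PolyMon ι → T),
      Continuous h → (∀ x y : PolyMon ι, h (x * y) = h x * h y) →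
      IsHClosedTISSet.{v, w} (Set.range h) := by
  intro T _ _ _ _ _ h hc hmul T' _ _ _ _ _ f _ hf hfmul
  let g : PolyMon ι →ₙ* T' :=
    { toFun := f ∘ Set.rangeFactorization h
      map_mul' := fun x y => by
        rw [Function.comp_apply, Function.comp_apply, Function.comp_apply,
          ← hfmul _ _ (hmul x y ▸ Set.mem_range_self (x * y))]
        exact congrArg f (Subtype.ext (hmul x y)) }
  have hg : Continuous g := hf.continuous.comp (hc.subtype_mk Set.mem_range_self)
  have hclosed := PolyMon.isClosed_range_of_continuous
    (PolyMon.zeroIsLimitOfMaxChains_of_infinite hchain) hg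
  rwa [MulHom.coe_mk, Set.rangeFactorization_surjective.range_comp] at hclosed

/-- If `τ` is a Hausdorff inverse semigroup topology on the λ-polycyclic monoid `P_λ`
(λ ≥ 2) such that every neighbourhood of `0` meets every maximal chain of the semilattice
`E(P_λ)` in an infinite set, then `(P_λ, τ)` is absolutely H-closed in the class of
topological inverse semigroups: the image of every continuous homomorphism into a
topological inverse semigroup is H-closed in that class. -/
theorem statement_9 {ι : Type u} [Nontrivial ι] [TopologicalSpace (PolyMon ι)]
    [T2Space (PolyMon ι)] [ContinuousMul (PolyMon ι)] [ContinuousInv (PolyMon ι)]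
    (hchain : ∀ U : Set (PolyMon ι), IsOpen U → (0 : PolyMon ι) ∈ U →
      ∀ L : Set (PolyMon ι), IsMaxChainIdem L → (U ∩ L).Infinite) :
    ∀ (T : Type v) [InverseSemigroup T] [TopologicalSpace T] [T2Space T]
      [ContinuousMul T] [ContinuousInv T] (h : PolyMon ι → T),
      Continuous h → (∀ x y : PolyMon ι, h (x * y) = h x * h y) →
      IsHClosedTISSet.{v, w} (Set.range h) :=
  statement_9_general hchain
end

section
/- Let τ be any Hausdorff topology on the λ-polycyclic monoid P_λ (λ ≥ 2 a cardinal) for which (P_λ, τ) is a topological inverse semigroup. Then for every finite subset A of the free monoid M_λ, the set U_A(0) = {a⁻¹b : a, b ∈ M_λ \ A} ∪ {0} is open in (P_λ, τ); indeed U_A(0) = P_λ \ (φ⁻¹(E_A) ∪ ψ⁻¹(E_A)), where φ(x) = x·x⁻¹, ψ(x) = x⁻¹·x, and E_A = {a⁻¹a : a ∈ A} is a finite set of nonzero idempotents. -/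
universe u v

/-- The basic neighbourhood `U_A(0) = {a⁻¹b : a, b ∈ M_λ \ A} ∪ {0}` of zero. -/
def U0 {ι : Type u} (A : Set (FreeMonoid ι)) : Set (PolyMon ι) :=
  {x | x = 0 ∨ ∃ a b : FreeMonoid ι, a ∉ A ∧ b ∉ A ∧ x = polyEl a b}

/-!
Since `(a⁻¹b)(a⁻¹b)⁻¹ = a⁻¹a` and `(a⁻¹b)⁻¹(a⁻¹b) = b⁻¹b`, a nonzero element `a⁻¹b` lies outside
`U_A(0)` exactly when `φ` or `ψ` sends it into `E_A`, while `φ(0) = ψ(0) = 0 ∉ E_A`. So `U_A(0)` is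
the complement of the preimages of the finite, hence closed, set `E_A` under the continuous maps
`φ` and `ψ`.
-/

section PolycyclicMonoid

variable {ι : Type u}

theorem eq_zero_or_eq_polyEl (x : PolyMon ι) : x = 0 ∨ ∃ a b, x = polyEl a b := by
  rcases x with _ | ⟨a, b⟩
  exacts [Or.inl rfl, Or.inr ⟨a, b, rfl⟩]

theorem polyEl_inv (a b : FreeMonoid ι) : (polyEl a b)⁻¹ = polyEl b a := rfl

theorem polyEl_mul_inv (a b : FreeMonoid ι) : polyEl a b * (polyEl a b)⁻¹ = polyEl a a := by
  have h : ∃ c₁ : FreeMonoid ι, b = c₁ * b := ⟨1, (one_mul b).symm⟩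
  have hc : Classical.choose h = 1 :=
    mul_eq_right.mp (Classical.choose_spec h).symm
  change polyMul (some (a, b)) (some (b, a)) = some (a, a)
  simp only [polyMul, Option.bind, dif_pos h, hc, one_mul]

theorem inv_mul_polyEl (a b : FreeMonoid ι) : (polyEl a b)⁻¹ * polyEl a b = polyEl b b := by
  rw [polyEl_inv]
  exact polyEl_mul_inv b a

def polyIdempotents (A : Set (FreeMonoid ι)) : Set (PolyMon ι) :=
  {x | ∃ a ∈ A, x = polyEl a a}

theorem polyEl_self_mem_polyIdempotents {A : Set (FreeMonoid ι)} {a : FreeMonoid ι} :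
    polyEl a a ∈ polyIdempotents A ↔ a ∈ A := by
  refine ⟨?_, fun ha => ⟨a, ha, rfl⟩⟩
  rintro ⟨c, hc, h⟩
  cases h
  exact hc

theorem zero_notMem_polyIdempotents (A : Set (FreeMonoid ι)) :
    (0 : PolyMon ι) ∉ polyIdempotents A := by
  rintro ⟨a, -, h⟩
  cases h

theorem isClosed_polyIdempotents [TopologicalSpace (PolyMon ι)] [T1Space (PolyMon ι)]
    {A : Set (FreeMonoid ι)} (hA : A.Finite) : IsClosed (polyIdempotents A) := by
  have : polyIdempotents A = (fun a => polyEl a a) '' A := by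
    ext x
    simp [polyIdempotents, eq_comm]
  rw [this]
  exact (hA.image _).isClosed

theorem zero_mem_U0 (A : Set (FreeMonoid ι)) : (0 : PolyMon ι) ∈ U0 A := Or.inl rfl

theorem polyEl_mem_U0 {A : Set (FreeMonoid ι)} {a b : FreeMonoid ι} :
    polyEl a b ∈ U0 A ↔ a ∉ A ∧ b ∉ A := by
  refine ⟨?_, fun ⟨ha, hb⟩ => Or.inr ⟨a, b, ha, hb, rfl⟩⟩
  rintro (h | ⟨c, d, hc, hd, h⟩)
  · cases h
  · cases h
    exact ⟨hc, hd⟩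

theorem U0_eq_compl (A : Set (FreeMonoid ι)) :
    U0 A = ((fun x : PolyMon ι => x * x⁻¹) ⁻¹' polyIdempotents A ∪
      (fun x : PolyMon ι => x⁻¹ * x) ⁻¹' polyIdempotents A)ᶜ := by
  ext x
  simp only [Set.mem_compl_iff, Set.mem_union, Set.mem_preimage, not_or]
  obtain rfl | ⟨a, b, rfl⟩ := eq_zero_or_eq_polyEl x
  · exact iff_of_true (zero_mem_U0 A)
      ⟨zero_notMem_polyIdempotents A, zero_notMem_polyIdempotents A⟩
  · rw [polyEl_mul_inv, inv_mul_polyEl, polyEl_self_mem_polyIdempotents,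
      polyEl_self_mem_polyIdempotents, polyEl_mem_U0]

end PolycyclicMonoid

theorem statement_14_general {ι : Type u} [TopologicalSpace (PolyMon ι)]
    [T2Space (PolyMon ι)] [ContinuousMul (PolyMon ι)] [ContinuousInv (PolyMon ι)]
    (A : Set (FreeMonoid ι)) (hA : A.Finite) :
    IsOpen (U0 A) ∧
    U0 A = Set.univ \
      ((fun x : PolyMon ι => x * x⁻¹) ⁻¹' {x | ∃ a ∈ A, x = polyEl a a} ∪
       (fun x : PolyMon ι => x⁻¹ * x) ⁻¹' {x | ∃ a ∈ A, x = polyEl a a}) := by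
  have hE := isClosed_polyIdempotents (ι := ι) hA
  refine ⟨?_, (U0_eq_compl A).trans (Set.compl_eq_univ_sdiff _)⟩
  rw [U0_eq_compl]
  exact ((hE.preimage (continuous_id.mul continuous_inv)).union
    (hE.preimage (continuous_inv.mul continuous_id))).isOpen_compl

/-- For λ ≥ 2 and any Hausdorff inverse semigroup topology `τ` on the λ-polycyclic monoid
`P_λ`, the set `U_A(0)` is `τ`-open for every finite `A ⊆ M_λ`; indeed
`U_A(0) = P_λ \ (φ⁻¹(E_A) ∪ ψ⁻¹(E_A))` where `φ(x) = x·x⁻¹`, `ψ(x) = x⁻¹·x` and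
`E_A = {a⁻¹a : a ∈ A}`. -/
theorem statement_14 {ι : Type u} [Nontrivial ι] [TopologicalSpace (PolyMon ι)]
    [T2Space (PolyMon ι)] [ContinuousMul (PolyMon ι)] [ContinuousInv (PolyMon ι)]
    (A : Set (FreeMonoid ι)) (hA : A.Finite) :
    IsOpen (U0 A) ∧
    U0 A = Set.univ \
      ((fun x : PolyMon ι => x * x⁻¹) ⁻¹' {x | ∃ a ∈ A, x = polyEl a a} ∪
       (fun x : PolyMon ι => x⁻¹ * x) ⁻¹' {x | ∃ a ∈ A, x = polyEl a a}) :=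
  statement_14_general A hA
end
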